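/- For every integer k ≥ 0, disc(A_k^±) ≥ disc(A_k)/2, where A_k^± is the 2^{k+1} × 2^k matrix obtained by stacking A_k^+ on top of A_k^-. In particular, disc(A_k^±) ≥ k/2. -/

import Mathlib

open scoped Kronecker

/-- The discrepancy of a real matrix: the minimum over ±1 colorings `x` of `‖A x‖_∞`
(the sup norm on `m → ℝ`). -/
noncomputable def disc {m n : Type*} [Fintype m] [Fintype n] (A : Matrix m n ℝ) : ℝ :=
  sInf { t | ∃ x : n → ℝ, (∀ j, x j = 1 ∨ x j = -1) ∧ t = ‖A.mulVec x‖ }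

/-- The `2^k × 2^k` discrete Haar basis matrix, defined recursively by `A_0 = [1]` and
`A_k = [[A_{k-1}, I], [A_{k-1}, -I]]`. -/
noncomputable def haar : (k : ℕ) → Matrix (Fin (2 ^ k)) (Fin (2 ^ k)) ℝ
  | 0 => Matrix.of fun _ _ => 1
  | k + 1 =>
      Matrix.reindex
        ((finSumFinEquiv (m := 2 ^ k) (n := 2 ^ k)).trans (finCongr (by rw [pow_succ, mul_two])))
        ((finSumFinEquiv (m := 2 ^ k) (n := 2 ^ k)).trans (finCongr (by rw [pow_succ, mul_two])))
        (Matrix.fromBlocks (haar k) (1 : Matrix (Fin (2 ^ k)) (Fin (2 ^ k)) ℝ)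
          (haar k) (-1 : Matrix (Fin (2 ^ k)) (Fin (2 ^ k)) ℝ))

/-- Indicator matrix of the positive entries of the Haar matrix. -/
noncomputable def haarPos (k : ℕ) : Matrix (Fin (2 ^ k)) (Fin (2 ^ k)) ℝ :=
  Matrix.of fun i j => if 0 < haar k i j then 1 else 0

/-- Indicator matrix of the negative entries of the Haar matrix. -/
noncomputable def haarNeg (k : ℕ) : Matrix (Fin (2 ^ k)) (Fin (2 ^ k)) ℝ :=
  Matrix.of fun i j => if haar k i j < 0 then 1 else 0

/-- The `2^(k+1) × 2^k` matrix `A_k^±` obtained by stacking `haarPos k` on top of `haarNeg k`. -/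
noncomputable def haarPM (k : ℕ) : Matrix (Fin (2 ^ (k + 1))) (Fin (2 ^ k)) ℝ :=
  Matrix.reindex
    ((finSumFinEquiv (m := 2 ^ k) (n := 2 ^ k)).trans (finCongr (by rw [pow_succ, mul_two])))
    (Equiv.refl (Fin (2 ^ k)))
    (Matrix.of (Sum.elim (fun i j => haarPos k i j) (fun i j => haarNeg k i j)))

/-!
Since the entries of `A_k` lie in `{-1, 0, 1}`, `A_k = A_k^+ - A_k^-`, so each entry of `A_k x` is
a difference of two entries of `A_k^± x` and `‖A_k x‖ ≤ 2 ‖A_k^± x‖`. For `disc A_k ≥ k`, split a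
coloring of `A_{k+1}` as `(y, z)`: the entries of `A_{k+1} (y, z)` are `(A_k y)_i ± z_i`, and at an
index `i` maximising `|(A_k y)_i|` one of the two signs gives `|(A_k y)_i| + 1`.
-/

open Matrix

lemma abs_add_abs_le_max_abs_add_abs_sub (a b : ℝ) : |a| + |b| ≤ max |a + b| |a - b| := by
  simp only [le_max_iff, le_abs]
  cases abs_cases a <;> cases abs_cases b <;> grind

section Discrepancy

variable {m m' n n' : Type*} [Fintype m] [Fintype n]

lemma disc_le_norm_mulVec (A : Matrix m n ℝ) {x : n → ℝ} (hx : ∀ j, x j = 1 ∨ x j = -1) :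
    disc A ≤ ‖A *ᵥ x‖ :=
  csInf_le ⟨0, by rintro _ ⟨y, -, rfl⟩; exact norm_nonneg _⟩ ⟨x, hx, rfl⟩

lemma le_disc {A : Matrix m n ℝ} {c : ℝ}
    (h : ∀ x : n → ℝ, (∀ j, x j = 1 ∨ x j = -1) → c ≤ ‖A *ᵥ x‖) : c ≤ disc A :=
  le_csInf ⟨_, 1, fun _ => Or.inl rfl, rfl⟩ (by rintro _ ⟨x, hx, rfl⟩; exact h x hx)

lemma disc_le_mul_disc [Fintype m'] {A : Matrix m n ℝ} {B : Matrix m' n ℝ} {c : ℝ}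
    (hc : 0 < c) (h : ∀ x, ‖A *ᵥ x‖ ≤ c * ‖B *ᵥ x‖) : disc A ≤ c * disc B := by
  rw [← div_le_iff₀' hc]
  refine le_disc fun x hx => ?_
  rw [div_le_iff₀' hc]
  exact (disc_le_norm_mulVec A hx).trans (h x)

lemma norm_mulVec_sub_le_two_mul_norm_fromRows_mulVec (P N : Matrix m n ℝ) (x : n → ℝ) :
    ‖(P - N) *ᵥ x‖ ≤ 2 * ‖fromRows P N *ᵥ x‖ := by
  refine (pi_norm_le_iff_of_nonneg (by positivity)).2 fun i => ?_
  have hP : ‖(P *ᵥ x) i‖ ≤ ‖fromRows P N *ᵥ x‖ := by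
    simpa using norm_le_pi_norm (fromRows P N *ᵥ x) (Sum.inl i)
  have hN : ‖(N *ᵥ x) i‖ ≤ ‖fromRows P N *ᵥ x‖ := by
    simpa using norm_le_pi_norm (fromRows P N *ᵥ x) (Sum.inr i)
  calc ‖((P - N) *ᵥ x) i‖ = ‖(P *ᵥ x) i - (N *ᵥ x) i‖ := by rw [sub_mulVec]; rfl
    _ ≤ ‖(P *ᵥ x) i‖ + ‖(N *ᵥ x) i‖ := norm_sub_le _ _
    _ ≤ 2 * ‖fromRows P N *ᵥ x‖ := by linarith

lemma norm_reindex_mulVec [Fintype m'] [Fintype n'] (e : m ≃ m') (f : n ≃ n')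
    (A : Matrix m n ℝ) (x : n' → ℝ) : ‖reindex e f A *ᵥ x‖ = ‖A *ᵥ (x ∘ f)‖ := by
  rw [reindex_apply, submatrix_mulVec_equiv, Equiv.symm_symm]
  exact e.symm.surjective.pi_norm_comp _

lemma add_one_le_norm_fromBlocks_mulVec [DecidableEq m] [Nonempty m] (H : Matrix m n ℝ)
    (y : n → ℝ) {z : m → ℝ} (hz : ∀ i, z i = 1 ∨ z i = -1) :
    ‖H *ᵥ y‖ + 1 ≤ ‖fromBlocks H 1 H (-1) *ᵥ Sum.elim y z‖ := by
  obtain ⟨⟨i, hi : ‖(H *ᵥ y) i‖ = ‖H *ᵥ y‖⟩, -⟩ := IsGreatest.pi_norm (H *ᵥ y)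
  have hzi : |z i| = 1 := by rcases hz i with h | h <;> simp [h]
  have htop : |(H *ᵥ y) i + z i| ≤ ‖fromBlocks H 1 H (-1) *ᵥ Sum.elim y z‖ := by
    simpa [fromBlocks_mulVec] using
      norm_le_pi_norm (fromBlocks H 1 H (-1) *ᵥ Sum.elim y z) (Sum.inl i)
  have hbot : |(H *ᵥ y) i - z i| ≤ ‖fromBlocks H 1 H (-1) *ᵥ Sum.elim y z‖ := by
    simpa [fromBlocks_mulVec, neg_mulVec, sub_eq_add_neg] using
      norm_le_pi_norm (fromBlocks H 1 H (-1) *ᵥ Sum.elim y z) (Sum.inr i)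
  calc ‖H *ᵥ y‖ + 1 = |(H *ᵥ y) i| + |z i| := by rw [← hi, hzi, Real.norm_eq_abs]
    _ ≤ _ := (abs_add_abs_le_max_abs_add_abs_sub _ _).trans (max_le htop hbot)

end Discrepancy

section Haar

def finSumFinEquivPowSucc (k : ℕ) : Fin (2 ^ k) ⊕ Fin (2 ^ k) ≃ Fin (2 ^ (k + 1)) :=
  finSumFinEquiv.trans (finCongr (by rw [pow_succ, mul_two]))

lemma haar_succ (k : ℕ) :
    haar (k + 1) = reindex (finSumFinEquivPowSucc k) (finSumFinEquivPowSucc k)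
      (fromBlocks (haar k) 1 (haar k) (-1)) := by
  rw [haar]; rfl

lemma haarPM_eq_reindex_fromRows (k : ℕ) :
    haarPM k =
      reindex (finSumFinEquivPowSucc k) (Equiv.refl _) (fromRows (haarPos k) (haarNeg k)) :=
  rfl

lemma haar_apply_eq_one_or_neg_one_or_zero (k : ℕ) (i j : Fin (2 ^ k)) :
    haar k i j = 1 ∨ haar k i j = -1 ∨ haar k i j = 0 := by
  induction k with
  | zero => exact Or.inl rfl
  | succ k ih =>
    obtain ⟨s, rfl⟩ := (finSumFinEquivPowSucc k).surjective i
    obtain ⟨t, rfl⟩ := (finSumFinEquivPowSucc k).surjective j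
    rw [haar_succ, reindex_apply, submatrix_apply, Equiv.symm_apply_apply, Equiv.symm_apply_apply]
    rcases s with a | a <;> rcases t with b | b <;> simp [one_apply]
    <;> first | exact ih a b | tauto

lemma haar_eq_haarPos_sub_haarNeg (k : ℕ) : haar k = haarPos k - haarNeg k := by
  ext i j
  rcases haar_apply_eq_one_or_neg_one_or_zero k i j with h | h | h <;>
    norm_num [haarPos, haarNeg, h]

lemma natCast_le_norm_haar_mulVec (k : ℕ) {x : Fin (2 ^ k) → ℝ}
    (hx : ∀ j, x j = 1 ∨ x j = -1) : (k : ℝ) ≤ ‖haar k *ᵥ x‖ := by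
  induction k with
  | zero => simp
  | succ k ih =>
    rw [haar_succ, norm_reindex_mulVec, ← Sum.elim_comp_inl_inr (x ∘ _)]
    push_cast
    calc (k : ℝ) + 1 ≤ ‖haar k *ᵥ (x ∘ _ ∘ Sum.inl)‖ + 1 := by
          gcongr; exact ih fun j => hx _
      _ ≤ _ := add_one_le_norm_fromBlocks_mulVec _ _ fun i => hx _

lemma natCast_le_disc_haar (k : ℕ) : (k : ℝ) ≤ disc (haar k) :=
  le_disc fun _ => natCast_le_norm_haar_mulVec k

lemma disc_haar_le_two_mul_disc_haarPM (k : ℕ) : disc (haar k) ≤ 2 * disc (haarPM k) :=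
  disc_le_mul_disc two_pos fun x => by
    rw [haar_eq_haarPos_sub_haarNeg, haarPM_eq_reindex_fromRows, norm_reindex_mulVec]
    exact norm_mulVec_sub_le_two_mul_norm_fromRows_mulVec _ _ x

end Haar

/-- For every `k ≥ 0`, `disc (A_k^±) ≥ disc (A_k) / 2`; in particular `disc (A_k^±) ≥ k/2`. -/
theorem stmt13 (k : ℕ) :
    disc (haar k) / 2 ≤ disc (haarPM k) ∧ (k : ℝ) / 2 ≤ disc (haarPM k) := by
  have := disc_haar_le_two_mul_disc_haarPM k
  have := natCast_le_disc_haar k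
  constructor <;> linarith
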